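/- (Stability of the semidual functional) Let μ, ν ∈ P_2(ℝ^d) with μ absolutely continuous with respect to Lebesgue measure, and let φ₀ be a convex function, differentiable μ-almost everywhere, whose gradient pushes μ forward to ν (the Brenier potential). Let φ : ℝ^d → ℝ be differentiable, (1/2)-strongly convex and 2-smooth, i.e., (1/4)‖y−x‖² ≤ φ(y) − φ(x) − ⟨∇φ(x), y−x⟩ ≤ ‖y−x‖² for all x, y ∈ ℝ^d. Define the semidual S(ψ) = ∫ ψ dμ + ∫ ψ* dν, where ψ* is the convex conjugate. Then (1/4) ‖∇φ − ∇φ₀‖²_{L²(μ)} ≤ S(φ) − S(φ₀) ≤ ‖∇φ − ∇φ₀‖²_{L²(μ)}. -/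

import Mathlib

noncomputable section

open MeasureTheory ENNReal
open scoped RealInnerProductSpace

/-- `ℝ^d` with its Euclidean structure. -/
abbrev Euc (d : ℕ) : Type := EuclideanSpace ℝ (Fin d)

/-- `μ` has a finite second moment, i.e. `μ ∈ P_2`. -/
def finiteSecondMoment {α : Type*} [MeasurableSpace α] [NormedAddCommGroup α]
    (μ : Measure α) : Prop :=
  ∫⁻ x, (‖x‖₊ : ℝ≥0∞) ^ 2 ∂μ ≠ ∞

/-- The convex conjugate `ψ*(y) = sup_x (⟨x,y⟩ − ψ(x))` of a real-valued function on `ℝ^d`. -/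
def conjugate {d : ℕ} (ψ : Euc d → ℝ) (y : Euc d) : ℝ :=
  sSup (Set.range fun x => ⟪x, y⟫ - ψ x)

/-- The semidual functional `S(ψ) = ∫ ψ dμ + ∫ ψ* dν`. -/
def semidual {d : ℕ} (μ ν : Measure (Euc d)) (ψ : Euc d → ℝ) : ℝ :=
  (∫ x, ψ x ∂μ) + ∫ y, conjugate ψ y ∂ν

/-! ### Auxiliary lemmas -/

section Aux

lemma sSup_range_eq_of_dense {X : Type*} [TopologicalSpace X] {f : X → ℝ}
    (hf : Continuous f) {D : ℕ → X} (hD : DenseRange D) :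
    sSup (Set.range f) = sSup (Set.range (f ∘ D)) := by
  have hub : upperBounds (Set.range f) = upperBounds (Set.range (f ∘ D)) := by
    apply subset_antisymm
    · exact upperBounds_mono_set (Set.range_comp_subset_range D f)
    · intro M hM x hx
      obtain ⟨z, rfl⟩ := hx
      by_contra hlt
      push_neg at hlt
      have hopen : IsOpen {w | M < f w} := isOpen_lt continuous_const hf
      obtain ⟨n, hn⟩ := hD.exists_mem_open hopen ⟨z, hlt⟩
      exact absurd (hM ⟨n, rfl⟩) (not_le.2 hn)
  by_cases hB : BddAbove (Set.range f)
  · have hB' : BddAbove (Set.range (f ∘ D)) := hB.mono (Set.range_comp_subset_range D f)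
    have hX : Nonempty X := ⟨D 0⟩
    have h1 : IsLUB (Set.range f) (sSup (Set.range f)) :=
      isLUB_csSup (Set.range_nonempty f) hB
    have h2 : IsLUB (Set.range (f ∘ D)) (sSup (Set.range (f ∘ D))) :=
      isLUB_csSup (Set.range_nonempty _) hB'
    have h2' : IsLUB (Set.range f) (sSup (Set.range (f ∘ D))) := by
      constructor
      · rw [hub]; exact h2.1
      · intro M hM; exact h2.2 (by rw [← hub]; exact hM)
    exact h1.unique h2'
  · have hB' : ¬ BddAbove (Set.range (f ∘ D)) := by
      intro h; exact hB (by rw [BddAbove, hub]; exact h)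
    rw [csSup_of_not_bddAbove hB, csSup_of_not_bddAbove hB']

lemma measurable_conjugate {d : ℕ} {ψ : Euc d → ℝ} (hψ : Continuous ψ) :
    Measurable (conjugate ψ) := by
  set D : ℕ → Euc d := TopologicalSpace.denseSeq (Euc d) with hDdef
  have hD : DenseRange D := TopologicalSpace.denseRange_denseSeq (Euc d)
  have key : ∀ y, conjugate ψ y = ⨆ n, (⟪D n, y⟫ - ψ (D n)) := by
    intro y
    have hc : Continuous fun z : Euc d => ⟪z, y⟫ - ψ z :=
      (continuous_id.inner continuous_const).sub hψ
    have := sSup_range_eq_of_dense hc hD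
    simpa [conjugate, iSup, Function.comp_def] using this
  simp only [funext key]
  have : ∀ n, Measurable fun y : Euc d => ⟪D n, y⟫ - ψ (D n) := by
    intro n
    exact ((continuous_const.inner continuous_id).sub continuous_const).measurable
  exact Measurable.iSup this

lemma conjugate_eq_of_forall_le {d : ℕ} {ψ : Euc d → ℝ} {x y : Euc d}
    (h : ∀ z, ⟪z, y⟫ - ψ z ≤ ⟪x, y⟫ - ψ x) :
    conjugate ψ y = ⟪x, y⟫ - ψ x :=
  IsGreatest.csSup_eq ⟨⟨x, rfl⟩, by rintro _ ⟨z, rfl⟩; exact h z⟩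

/-- Subgradient inequality for a convex differentiable function. -/
lemma ConvexOn.inner_le_sub' {d : ℕ} {ψ : Euc d → ℝ} {g x : Euc d}
    (hcvx : ConvexOn ℝ Set.univ ψ) (hd : HasGradientAt ψ g x) (z : Euc d) :
    ⟪g, z - x⟫ ≤ ψ z - ψ x := by
  have hline : HasDerivAt (fun t : ℝ => ψ (x + t • (z - x))) ⟪g, z - x⟫ 0 := by
    have h1 : HasDerivAt (fun t : ℝ => x + t • (z - x)) (z - x) 0 := by
      simpa using ((hasDerivAt_id (0:ℝ)).smul_const (z - x)).const_add x
    have hd' : HasFDerivAt ψ (InnerProductSpace.toDual ℝ (Euc d) g)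
        (x + (0:ℝ) • (z - x)) := by simpa using hd.hasFDerivAt
    have h2 := hd'.comp_hasDerivAt 0 h1
    simpa [real_inner_comm, Function.comp_def] using h2
  have hslope : ∀ t ∈ Set.Ioo (0:ℝ) 1,
      (ψ (x + t • (z - x)) - ψ x) / t ≤ ψ z - ψ x := by
    intro t ht
    have hcx : ψ (x + t • (z - x)) ≤ (1 - t) * ψ x + t * ψ z := by
      have := hcvx.2 (Set.mem_univ x) (Set.mem_univ z)
        (by linarith [ht.1, ht.2] : (0:ℝ) ≤ 1 - t) (le_of_lt ht.1) (by ring)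
      calc ψ (x + t • (z - x)) = ψ ((1 - t) • x + t • z) := by
            congr 1
            module
        _ ≤ (1 - t) * ψ x + t * ψ z := this
    rw [div_le_iff₀ ht.1]
    nlinarith [ht.1]
  have htend : Filter.Tendsto (slope (fun t : ℝ => ψ (x + t • (z - x))) 0)
      (nhdsWithin 0 (Set.Ioi (0:ℝ))) (nhds ⟪g, z - x⟫) := by
    have h := hasDerivAt_iff_tendsto_slope.1 hline
    exact h.mono_left (nhdsWithin_mono 0 (fun t ht => ne_of_gt ht))
  refine le_of_tendsto htend ?_
  filter_upwards [Ioo_mem_nhdsGT_of_mem (Set.mem_Ico.2 ⟨le_refl (0:ℝ), one_pos⟩)] with t ht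
  have := hslope t ht
  simpa [slope_def_field, div_eq_inv_mul] using this

section strong
variable {d : ℕ} {φ : Euc d → ℝ} {gφ : Euc d → Euc d}

lemma inner_expand' (x y z w : Euc d) :
    ⟪z, y⟫ - ⟪x, y⟫ - ⟪w, z - x⟫ = ⟪z - x, y - w⟫ := by
  simp only [inner_sub_left, inner_sub_right]
  rw [real_inner_comm w z, real_inner_comm w x]

lemma conj_pointwise_le
    (hstrong : ∀ x y, (1 / 4) * ‖y - x‖ ^ 2 ≤ φ y - φ x - ⟪gφ x, y - x⟫)
    (x y z : Euc d) :
    ⟪z, y⟫ - φ z ≤ ⟪x, y⟫ - φ x + ‖y - gφ x‖ ^ 2 := by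
  have h1 := hstrong x z
  have h2 : ⟪z, y⟫ - ⟪x, y⟫ - ⟪gφ x, z - x⟫ = ⟪z - x, y - gφ x⟫ :=
    inner_expand' x y z (gφ x)
  have h3 : ⟪z - x, y - gφ x⟫ ≤ ‖z - x‖ * ‖y - gφ x‖ := real_inner_le_norm _ _
  nlinarith [sq_nonneg (‖z - x‖ / 2 - ‖y - gφ x‖)]

lemma conj_le
    (hstrong : ∀ x y, (1 / 4) * ‖y - x‖ ^ 2 ≤ φ y - φ x - ⟪gφ x, y - x⟫)
    (x y : Euc d) :
    conjugate φ y ≤ ⟪x, y⟫ - φ x + ‖y - gφ x‖ ^ 2 := by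
  apply csSup_le (Set.range_nonempty _)
  rintro _ ⟨z, rfl⟩
  exact conj_pointwise_le hstrong x y z

lemma conj_ge
    (hstrong : ∀ x y, (1 / 4) * ‖y - x‖ ^ 2 ≤ φ y - φ x - ⟪gφ x, y - x⟫)
    (hsmooth : ∀ x y, φ y - φ x - ⟪gφ x, y - x⟫ ≤ ‖y - x‖ ^ 2)
    (x y : Euc d) :
    ⟪x, y⟫ - φ x + (1 / 4) * ‖y - gφ x‖ ^ 2 ≤ conjugate φ y := by
  set z := x + (1 / 2 : ℝ) • (y - gφ x) with hz
  have hbdd : BddAbove (Set.range fun w : Euc d => ⟪w, y⟫ - φ w) := by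
    refine ⟨⟪x, y⟫ - φ x + ‖y - gφ x‖ ^ 2, ?_⟩
    rintro _ ⟨w, rfl⟩
    exact conj_pointwise_le hstrong x y w
  have hmem : ⟪z, y⟫ - φ z ≤ conjugate φ y := le_csSup hbdd ⟨z, rfl⟩
  have hsm := hsmooth x z
  have hzx : z - x = (1 / 2 : ℝ) • (y - gφ x) := by rw [hz]; abel
  have h2 : ⟪z, y⟫ - ⟪x, y⟫ - ⟪gφ x, z - x⟫ = ⟪z - x, y - gφ x⟫ :=
    inner_expand' x y z (gφ x)
  have h3 : ⟪z - x, y - gφ x⟫ = (1 / 2) * ‖y - gφ x‖ ^ 2 := by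
    rw [hzx, real_inner_smul_left, real_inner_self_eq_norm_sq]
  have h4 : ‖z - x‖ ^ 2 = (1 / 4) * ‖y - gφ x‖ ^ 2 := by
    have hn : ‖z - x‖ = (1 / 2) * ‖y - gφ x‖ := by
      rw [hzx, norm_smul]; simp
    rw [hn]; ring
  nlinarith

lemma conj_at_grad
    (hstrong : ∀ x y, (1 / 4) * ‖y - x‖ ^ 2 ≤ φ y - φ x - ⟪gφ x, y - x⟫)
    (x : Euc d) :
    conjugate φ (gφ x) = ⟪x, gφ x⟫ - φ x := by
  apply conjugate_eq_of_forall_le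
  intro z
  have h1 := hstrong x z
  have h2 : ⟪z, gφ x⟫ - ⟪x, gφ x⟫ - ⟪gφ x, z - x⟫ = ⟪z - x, gφ x - gφ x⟫ :=
    inner_expand' x (gφ x) z (gφ x)
  simp only [sub_self, inner_zero_right] at h2
  nlinarith [sq_nonneg ‖z - x‖]

lemma grad_lipschitz
    (hstrong : ∀ x y, (1 / 4) * ‖y - x‖ ^ 2 ≤ φ y - φ x - ⟪gφ x, y - x⟫)
    (hsmooth : ∀ x y, φ y - φ x - ⟪gφ x, y - x⟫ ≤ ‖y - x‖ ^ 2)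
    (x y : Euc d) : ‖gφ y - gφ x‖ ≤ 2 * ‖y - x‖ := by
  have h1 := conj_ge hstrong hsmooth x (gφ y)
  have h2 := conj_ge hstrong hsmooth y (gφ x)
  rw [conj_at_grad hstrong y] at h1
  rw [conj_at_grad hstrong x] at h2
  have hs : ‖gφ x - gφ y‖ = ‖gφ y - gφ x‖ := norm_sub_rev _ _
  have hsum : (1 / 2) * ‖gφ y - gφ x‖ ^ 2 ≤ ⟪y - x, gφ y - gφ x⟫ := by
    have expand : ⟪y - x, gφ y - gφ x⟫
        = ⟪y, gφ y⟫ - ⟪x, gφ y⟫ - ⟪y, gφ x⟫ + ⟪x, gφ x⟫ := by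
      simp only [inner_sub_left, inner_sub_right]; ring
    rw [hs] at h2
    linarith [h1, h2]
  have hCS : ⟪y - x, gφ y - gφ x⟫ ≤ ‖y - x‖ * ‖gφ y - gφ x‖ := real_inner_le_norm _ _
  by_cases hzero : ‖gφ y - gφ x‖ = 0
  · rw [hzero]; positivity
  · have hpos : 0 < ‖gφ y - gφ x‖ := lt_of_le_of_ne (norm_nonneg _) (Ne.symm hzero)
    nlinarith

end strong

end Aux


lemma finiteSecondMoment.integrable_sq {d : ℕ} {μ : Measure (Euc d)}
    (h : finiteSecondMoment μ) : Integrable (fun x : Euc d => ‖x‖ ^ 2) μ := by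
  refine ⟨(continuous_norm.pow 2).aestronglyMeasurable, ?_⟩
  rw [hasFiniteIntegral_def]
  have heq : ∀ x : Euc d, ‖(‖x‖ ^ 2 : ℝ)‖ₑ = (‖x‖₊ : ℝ≥0∞) ^ 2 := fun x => by
    rw [enorm_eq_nnnorm, nnnorm_pow, nnnorm_norm, ENNReal.coe_pow]
  simp only [heq]
  exact h.lt_top

/-- **Stability of the semidual functional.** Let `μ, ν ∈ P_2(ℝ^d)` with `μ` absolutely
continuous, let `φ₀` be a convex Brenier potential (differentiable `μ`-a.e., its gradient
pushing `μ` to `ν`), and let `φ : ℝ^d → ℝ` be differentiable, `(1/2)`-strongly convex and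
`2`-smooth, i.e. `(1/4)‖y−x‖² ≤ φ(y) − φ(x) − ⟨∇φ(x), y−x⟩ ≤ ‖y−x‖²`. Then
`(1/4)‖∇φ − ∇φ₀‖²_{L²(μ)} ≤ S(φ) − S(φ₀) ≤ ‖∇φ − ∇φ₀‖²_{L²(μ)}`. -/
theorem semidual_stability (d : ℕ) (μ ν : Measure (Euc d))
    [IsProbabilityMeasure μ] [IsProbabilityMeasure ν]
    (hμ2 : finiteSecondMoment μ) (hν2 : finiteSecondMoment ν)
    (hac : μ ≪ volume)
    (φ₀ : Euc d → ℝ) (g₀ : Euc d → Euc d)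
    (hφ₀cvx : ConvexOn ℝ Set.univ φ₀)
    (hφ₀diff : ∀ᵐ x ∂μ, HasGradientAt φ₀ (g₀ x) x)
    (hpush : μ.map g₀ = ν)
    (φ : Euc d → ℝ) (gφ : Euc d → Euc d)
    (hφdiff : ∀ x, HasGradientAt φ (gφ x) x)
    (hstrong : ∀ x y, (1 / 4) * ‖y - x‖ ^ 2 ≤ φ y - φ x - ⟪gφ x, y - x⟫)
    (hsmooth : ∀ x y, φ y - φ x - ⟪gφ x, y - x⟫ ≤ ‖y - x‖ ^ 2) :
    (1 / 4) * (∫ x, ‖gφ x - g₀ x‖ ^ 2 ∂μ) ≤ semidual μ ν φ - semidual μ ν φ₀ ∧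
    semidual μ ν φ - semidual μ ν φ₀ ≤ ∫ x, ‖gφ x - g₀ x‖ ^ 2 ∂μ := by
  classical
  -- continuity facts
  have hφcont : Continuous φ := by
    apply continuous_iff_continuousAt.2
    intro x
    exact (hφdiff x).hasFDerivAt.differentiableAt.continuousAt
  have hφ₀cont : Continuous φ₀ := by
    rw [← continuousOn_univ]
    exact hφ₀cvx.continuousOn isOpen_univ
  have hgφcont : Continuous gφ := by
    have hl : LipschitzWith 2 gφ := by
      apply LipschitzWith.of_dist_le_mul
      intro x y
      rw [dist_eq_norm, dist_eq_norm]
      exact_mod_cast grad_lipschitz hstrong hsmooth y x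
    exact hl.continuous
  have hg₀meas : AEMeasurable g₀ μ := by
    by_contra h
    rw [Measure.map_of_not_aemeasurable h] at hpush
    exact (IsProbabilityMeasure.ne_zero ν) hpush.symm
  -- basic integrabilities
  have hx2 : Integrable (fun x : Euc d => ‖x‖ ^ 2) μ := hμ2.integrable_sq
  have hg2 : Integrable (fun x => ‖g₀ x‖ ^ 2) μ := by
    have hν' : Integrable (fun y : Euc d => ‖y‖ ^ 2) ν := hν2.integrable_sq
    rw [← hpush] at hν'
    exact (integrable_map_measure (continuous_norm.pow 2).aestronglyMeasurable hg₀meas).1 hν'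
  have hx1 : Integrable (fun x : Euc d => ‖x‖) μ := by
    refine ((integrable_const (1:ℝ)).add hx2).mono' continuous_norm.aestronglyMeasurable ?_
    filter_upwards with x
    simp only [Pi.add_apply]
    rw [norm_norm]
    nlinarith [norm_nonneg x, sq_nonneg (‖x‖ - 1)]
  have hg1 : Integrable (fun x : Euc d => ‖g₀ x‖) μ := by
    refine ((integrable_const (1:ℝ)).add hg2).mono'
      ((continuous_norm.measurable.comp_aemeasurable hg₀meas).aestronglyMeasurable) ?_
    filter_upwards with x
    simp only [Pi.add_apply]
    rw [norm_norm]
    nlinarith [norm_nonneg (g₀ x), sq_nonneg (‖g₀ x‖ - 1)]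
  have hgx : Integrable (fun x : Euc d => ‖g₀ x‖ * ‖x‖) μ := by
    refine (hg2.add hx2).mono'
      (((continuous_norm.measurable.comp_aemeasurable hg₀meas).mul
        continuous_norm.aemeasurable).aestronglyMeasurable) ?_
    filter_upwards with x
    simp only [Pi.add_apply]
    rw [norm_mul, norm_norm, norm_norm]
    nlinarith [norm_nonneg x, norm_nonneg (g₀ x), sq_nonneg (‖g₀ x‖ - ‖x‖)]
  -- a base point where φ₀ is differentiable
  have hne : (ae μ).NeBot := ae_neBot.2 (IsProbabilityMeasure.ne_zero μ)
  obtain ⟨x₀, hx₀⟩ := hφ₀diff.exists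
  -- integrability of φ₀
  have hφ₀int : Integrable φ₀ μ := by
    have hdom : Integrable
        (fun x : Euc d => ‖φ₀ x₀‖ + (‖g₀ x₀‖ + ‖g₀ x‖) * (‖x‖ + ‖x₀‖)) μ := by
      have hrw : (fun x : Euc d => ‖φ₀ x₀‖ + (‖g₀ x₀‖ + ‖g₀ x‖) * (‖x‖ + ‖x₀‖))
          = fun x : Euc d => (‖φ₀ x₀‖ + (‖g₀ x₀‖ * ‖x₀‖) + (‖g₀ x₀‖ * ‖x‖))
            + ((‖g₀ x‖ * ‖x‖) + ‖x₀‖ * ‖g₀ x‖) := by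
        funext x; ring
      rw [hrw]
      exact (((integrable_const _).add (hx1.const_mul _)).add
        (hgx.add (hg1.const_mul _)))
    refine hdom.mono' hφ₀cont.aestronglyMeasurable ?_
    filter_upwards [hφ₀diff] with x hx
    have hlow := hφ₀cvx.inner_le_sub' hx₀ x
    have hupp := hφ₀cvx.inner_le_sub' hx x₀
    have h1 : |⟪g₀ x₀, x - x₀⟫| ≤ ‖g₀ x₀‖ * (‖x‖ + ‖x₀‖) := by
      refine (abs_real_inner_le_norm _ _).trans ?_
      have h := norm_sub_le x x₀
      nlinarith [norm_nonneg (g₀ x₀)]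
    have h2 : |⟪g₀ x, x₀ - x⟫| ≤ ‖g₀ x‖ * (‖x‖ + ‖x₀‖) := by
      refine (abs_real_inner_le_norm _ _).trans ?_
      have h := norm_sub_le x₀ x
      nlinarith [norm_nonneg (g₀ x)]
    have hnn : 0 ≤ (‖x‖ + ‖x₀‖) := by positivity
    rw [Real.norm_eq_abs, Real.norm_eq_abs, abs_le]
    obtain ⟨h1a, h1b⟩ := abs_le.1 h1
    obtain ⟨h2a, h2b⟩ := abs_le.1 h2
    constructor
    · nlinarith [le_abs_self (φ₀ x₀), neg_abs_le (φ₀ x₀),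
        mul_nonneg (norm_nonneg (g₀ x)) hnn, mul_nonneg (norm_nonneg (g₀ x₀)) hnn]
    · nlinarith [le_abs_self (φ₀ x₀), neg_abs_le (φ₀ x₀),
        mul_nonneg (norm_nonneg (g₀ x)) hnn, mul_nonneg (norm_nonneg (g₀ x₀)) hnn]
  -- integrability of φ
  have hφint : Integrable φ μ := by
    refine (((integrable_const (‖φ 0‖ : ℝ)).add (hx1.const_mul ‖gφ 0‖)).add hx2).mono'
      hφcont.aestronglyMeasurable ?_
    filter_upwards with x
    simp only [Pi.add_apply]
    have h1 := hstrong 0 x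
    have h2 := hsmooth 0 x
    simp only [sub_zero] at h1 h2
    obtain ⟨hi1, hi2⟩ := abs_le.1 (abs_real_inner_le_norm (gφ 0) x)
    simp only [Real.norm_eq_abs]
    rw [abs_le]
    constructor
    · nlinarith [le_abs_self (φ 0), neg_abs_le (φ 0), sq_nonneg ‖x‖]
    · nlinarith [le_abs_self (φ 0), neg_abs_le (φ 0), sq_nonneg ‖x‖]
  -- integrability of conjugate φ ∘ g₀
  have hconjφmeas : Measurable (conjugate φ) := measurable_conjugate hφcont
  have hconjbound : ∀ y : Euc d,
      ‖conjugate φ y‖ ≤ (‖φ 0‖ + 2 * ‖gφ 0‖ ^ 2) + 2 * ‖y‖ ^ 2 := by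
    intro y
    have hup := conj_le hstrong 0 y
    have hlo := conj_ge hstrong hsmooth 0 y
    simp only [inner_zero_left, zero_sub, sub_zero] at hup hlo
    have hy : ‖y - gφ 0‖ ^ 2 ≤ 2 * ‖y‖ ^ 2 + 2 * ‖gφ 0‖ ^ 2 := by
      have h := norm_sub_le y (gφ 0)
      nlinarith [norm_nonneg y, norm_nonneg (gφ 0), norm_nonneg (y - gφ 0),
        sq_nonneg (‖y‖ - ‖gφ 0‖)]
    rw [Real.norm_eq_abs, abs_le]
    constructor
    · nlinarith [le_abs_self (φ 0), neg_abs_le (φ 0), sq_nonneg ‖y - gφ 0‖,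
        sq_nonneg ‖y‖, sq_nonneg ‖gφ 0‖, Real.norm_eq_abs (φ 0)]
    · nlinarith [le_abs_self (φ 0), neg_abs_le (φ 0), sq_nonneg ‖y‖,
        sq_nonneg ‖gφ 0‖, Real.norm_eq_abs (φ 0)]
  have hconjφint : Integrable (fun x => conjugate φ (g₀ x)) μ := by
    refine ((integrable_const ((‖φ 0‖ + 2 * ‖gφ 0‖ ^ 2) : ℝ)).add (hg2.const_mul 2)).mono'
      ((hconjφmeas.comp_aemeasurable hg₀meas).aestronglyMeasurable) ?_
    filter_upwards with x
    simp only [Pi.add_apply]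
    exact hconjbound (g₀ x)
  -- Fenchel equality for φ₀ almost everywhere
  have hfenchel : ∀ᵐ x ∂μ, conjugate φ₀ (g₀ x) = ⟪x, g₀ x⟫ - φ₀ x := by
    filter_upwards [hφ₀diff] with x hx
    apply conjugate_eq_of_forall_le
    intro z
    have hsub := hφ₀cvx.inner_le_sub' hx z
    have hin : ⟪z, g₀ x⟫ - ⟪x, g₀ x⟫ = ⟪g₀ x, z - x⟫ := by
      rw [← inner_sub_left, real_inner_comm]
    linarith
  have hinner_int : Integrable (fun x : Euc d => ⟪x, g₀ x⟫) μ := by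
    have haesm : AEStronglyMeasurable (fun x : Euc d => ⟪x, g₀ x⟫) μ :=
      (continuous_inner.measurable.comp_aemeasurable
        (aemeasurable_id.prodMk hg₀meas)).aestronglyMeasurable
    refine hgx.mono' haesm ?_
    filter_upwards with x
    rw [Real.norm_eq_abs]
    exact (abs_real_inner_le_norm x (g₀ x)).trans_eq (mul_comm _ _)
  have hconjφ₀int : Integrable (fun x => conjugate φ₀ (g₀ x)) μ :=
    (hinner_int.sub hφ₀int).congr (hfenchel.mono fun x hx => hx.symm)
  -- push the ν-integrals back to μ
  have hmapφ : ∫ y, conjugate φ y ∂ν = ∫ x, conjugate φ (g₀ x) ∂μ := by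
    rw [← hpush]
    exact integral_map hg₀meas hconjφmeas.aestronglyMeasurable
  have hmapφ₀ : ∫ y, conjugate φ₀ y ∂ν = ∫ x, conjugate φ₀ (g₀ x) ∂μ := by
    rw [← hpush]
    exact integral_map hg₀meas (measurable_conjugate hφ₀cont).aestronglyMeasurable
  have hIsum : Integrable (fun x => φ x + conjugate φ (g₀ x)) μ := hφint.add hconjφint
  have hIsum₀ : Integrable (fun x => φ₀ x + conjugate φ₀ (g₀ x)) μ := hφ₀int.add hconjφ₀int
  have hDint : Integrable
      (fun x => φ x + conjugate φ (g₀ x) - (φ₀ x + conjugate φ₀ (g₀ x))) μ :=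
    hIsum.sub hIsum₀
  have hdiff : semidual μ ν φ - semidual μ ν φ₀
      = ∫ x, (φ x + conjugate φ (g₀ x) - (φ₀ x + conjugate φ₀ (g₀ x))) ∂μ := by
    rw [semidual, semidual, hmapφ, hmapφ₀, ← integral_add hφint hconjφint,
      ← integral_add hφ₀int hconjφ₀int, ← integral_sub hIsum hIsum₀]
  -- pointwise a.e. bounds
  have hae_up : ∀ᵐ x ∂μ,
      φ x + conjugate φ (g₀ x) - (φ₀ x + conjugate φ₀ (g₀ x)) ≤ ‖gφ x - g₀ x‖ ^ 2 := by
    filter_upwards [hfenchel] with x hx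
    rw [hx]
    have h := conj_le hstrong x (g₀ x)
    have hrev : ‖g₀ x - gφ x‖ ^ 2 = ‖gφ x - g₀ x‖ ^ 2 := by rw [norm_sub_rev]
    linarith
  have hae_lo : ∀ᵐ x ∂μ,
      (1 / 4) * ‖gφ x - g₀ x‖ ^ 2
        ≤ φ x + conjugate φ (g₀ x) - (φ₀ x + conjugate φ₀ (g₀ x)) := by
    filter_upwards [hfenchel] with x hx
    rw [hx]
    have h := conj_ge hstrong hsmooth x (g₀ x)
    have hrev : ‖g₀ x - gφ x‖ ^ 2 = ‖gφ x - g₀ x‖ ^ 2 := by rw [norm_sub_rev]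
    linarith
  -- integrability of the quadratic target
  have hgφx2 : Integrable (fun x => ‖gφ x - g₀ x‖ ^ 2) μ := by
    have haesm : AEStronglyMeasurable (fun x => ‖gφ x - g₀ x‖ ^ 2) μ :=
      (((hgφcont.aemeasurable.sub hg₀meas).norm).pow_const 2).aestronglyMeasurable
    refine ((integrable_const ((4 * ‖gφ 0‖ ^ 2 : ℝ))).add
      ((hx2.const_mul 16).add (hg2.const_mul 2))).mono' haesm ?_
    filter_upwards with x
    simp only [Pi.add_apply]
    have ht1 : ‖gφ x - g₀ x‖ ≤ ‖gφ x‖ + ‖g₀ x‖ := norm_sub_le _ _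
    have ht2 : ‖gφ x - gφ 0‖ ≤ 2 * ‖x - 0‖ := grad_lipschitz hstrong hsmooth 0 x
    rw [sub_zero] at ht2
    have ht3 : ‖gφ x‖ ≤ ‖gφ 0‖ + 2 * ‖x‖ := by
      have := norm_sub_norm_le (gφ x) (gφ 0)
      linarith
    rw [Real.norm_eq_abs, abs_of_nonneg (by positivity)]
    nlinarith [norm_nonneg (gφ x - g₀ x), norm_nonneg (gφ x), norm_nonneg (g₀ x),
      norm_nonneg x, norm_nonneg (gφ 0), sq_nonneg (‖gφ x‖ - ‖g₀ x‖),
      sq_nonneg (‖gφ 0‖ - 2 * ‖x‖)]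
  constructor
  · rw [hdiff, ← integral_const_mul]
    exact integral_mono_ae (hgφx2.const_mul _) hDint hae_lo
  · rw [hdiff]
    exact integral_mono_ae hDint hgφx2 hae_up
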